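/- Let d ≥ 3 be an integer, S = diag(e^{iφ₁}, e^{iφ₂}) a diagonal 2×2 unitary matrix, and W a d×d unitary matrix with entries w_{st} = (1/√d)e^{iθ_{st}} (s,t∈{1,…,d}). Suppose each of the following differences is an odd multiple of π/2 (i.e. equals ±(π/2 + lπ) for some l∈{0,1,−1}): for all k,j∈{1,…,d−2}: (φ₁+θ_{k,j})−(φ₂+θ_{k+1,j+1}), (φ₁+θ_{k,d})−(φ₂+θ_{k+1,d}), (φ₁+θ_{d,j})−(φ₂+θ_{d,j+1}), (φ₁+θ_{k,d−1})−(φ₂+θ_{k+1,1}), (φ₁+θ_{d−1,j})−(φ₂+θ_{1,j+1}); and also (φ₁+θ_{d−1,d−1})−(φ₂+θ_{11}), (φ₁+θ_{d−1,d})−(φ₂+θ_{1,d}), (φ₁+θ_{d,d−1})−(φ₂+θ_{d,1}), and φ₁−φ₂. Then the two bases {|φ_{n,m}⟩} and {(S⊗W)|φ_{p,q}⟩} of C²⊗C^d are mutually unbiased: |⟨φ_{n,m}|(S⊗W)|φ_{p,q}⟩| = 1/√(2d) for all n,p∈{0,1}, m,q∈{0,…,d−1}. -/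

import Mathlib

open scoped Kronecker

noncomputable def phi (d : ℕ) (n : Fin 2) (m : Fin d) : EuclideanSpace ℂ (Fin 2 × Fin d) :=
  WithLp.toLp 2 (fun (p : Fin 2 × Fin d) =>
    (Real.sqrt 2 : ℂ)⁻¹ * (-1 : ℂ) ^ ((n : ℕ) * (p.1 : ℕ)) *
      (if (p.2 : ℕ) = (if (m : ℕ) = d - 1 then d - 1 else ((m : ℕ) + (p.1 : ℕ)) % (d - 1))
        then 1 else 0))

noncomputable def psi (d : ℕ) (S : Matrix (Fin 2) (Fin 2) ℂ) (W : Matrix (Fin d) (Fin d) ℂ)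
    (n : Fin 2) (m : Fin d) : EuclideanSpace ℂ (Fin 2 × Fin d) :=
  WithLp.toLp 2 ((S ⊗ₖ W).mulVec (phi d n m))

/-- `x` is an odd multiple of `π/2`, i.e. `x = ±(π/2 + lπ)` for some `l ∈ {0, 1, -1}`. -/
def OddPiHalf (x : ℝ) : Prop :=
  ∃ l : ℤ, l ∈ ({0, 1, -1} : Set ℤ) ∧
    (x = Real.pi / 2 + l * Real.pi ∨ x = -(Real.pi / 2 + l * Real.pi))

lemma oddPiHalf_cos {x : ℝ} (h : OddPiHalf x) : Real.cos x = 0 := by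
  obtain ⟨l, -, rfl | rfl⟩ := h <;> simp [Real.cos_add, Real.sin_int_mul_pi]

lemma norm_exp_add_of_oddPiHalf {x : ℝ} (hx : OddPiHalf x) {ε : ℂ} (hε : ε = 1 ∨ ε = -1) :
    ‖Complex.exp (x * Complex.I) + ε‖ = Real.sqrt 2 := by
  have hcos : Real.cos x = 0 := oddPiHalf_cos hx
  have hsin : Real.sin x ^ 2 = 1 := by
    have := Real.sin_sq_add_cos_sq x; rw [hcos] at this; linarith
  have hexp : Complex.exp (x * Complex.I) = Real.cos x + Real.sin x * Complex.I := by
    rw [Complex.exp_mul_I]; simp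
  rcases hε with rfl | rfl
  · have h : Complex.exp (x * Complex.I) + 1 =
        ((Real.cos x + 1 : ℝ) : ℂ) + (Real.sin x : ℝ) * Complex.I := by
      rw [hexp]; push_cast; ring
    rw [h, Complex.norm_add_mul_I, hcos]
    norm_num [hsin]
  · have h : Complex.exp (x * Complex.I) + (-1) =
        ((Real.cos x - 1 : ℝ) : ℂ) + (Real.sin x : ℝ) * Complex.I := by
      rw [hexp]; push_cast; ring
    rw [h, Complex.norm_add_mul_I, hcos]
    norm_num [hsin]

def gval (d : ℕ) (m : Fin d) (a : Fin 2) : ℕ :=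
  if (m : ℕ) = d - 1 then d - 1 else ((m : ℕ) + (a : ℕ)) % (d - 1)

lemma gval_lt (d : ℕ) (hd : 3 ≤ d) (m : Fin d) (a : Fin 2) : gval d m a < d := by
  unfold gval; split
  · omega
  · have : ((m : ℕ) + (a : ℕ)) % (d - 1) < d - 1 := Nat.mod_lt _ (by omega)
    omega

def E (d : ℕ) (hd : 3 ≤ d) (m : Fin d) (a : Fin 2) : Fin d := ⟨gval d m a, gval_lt d hd m a⟩

lemma phi_apply (d : ℕ) (hd : 3 ≤ d) (n : Fin 2) (m : Fin d) (x : Fin 2 × Fin d) :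
    phi d n m x = (Real.sqrt 2 : ℂ)⁻¹ * (-1 : ℂ) ^ ((n : ℕ) * (x.1 : ℕ)) *
      (if x.2 = E d hd m x.1 then 1 else 0) := by
  unfold phi E gval
  dsimp only
  congr 1
  simp [Fin.ext_iff]

lemma inner_eq (d : ℕ) (hd : 3 ≤ d) (s₀ s₁ : ℂ) (W : Matrix (Fin d) (Fin d) ℂ)
    (n p : Fin 2) (m q : Fin d) :
    (inner ℂ (phi d n m) (psi d (Matrix.diagonal ![s₀, s₁]) W p q) : ℂ) =
      (2 : ℂ)⁻¹ * (s₀ * W (E d hd m 0) (E d hd q 0) +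
        (-1 : ℂ) ^ ((n : ℕ) + (p : ℕ)) * s₁ * W (E d hd m 1) (E d hd q 1)) := by
  have h2 : ((Real.sqrt 2 : ℝ) : ℂ)⁻¹ * ((Real.sqrt 2 : ℝ) : ℂ)⁻¹ = (2 : ℂ)⁻¹ := by
    rw [← mul_inv, ← Complex.ofReal_mul, Real.mul_self_sqrt (by norm_num)]; norm_num
  have hpsi : ∀ x : Fin 2 × Fin d,
      psi d (Matrix.diagonal ![s₀, s₁]) W p q x =
        ![s₀, s₁] x.1 * W x.2 (E d hd q x.1) *
          ((Real.sqrt 2 : ℂ)⁻¹ * (-1 : ℂ) ^ ((p : ℕ) * (x.1 : ℕ))) := by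
    intro x
    show ((Matrix.diagonal ![s₀, s₁]) ⊗ₖ W).mulVec (phi d p q) x = _
    rw [Matrix.mulVec, dotProduct]
    calc ∑ y : Fin 2 × Fin d, ((Matrix.diagonal ![s₀, s₁]) ⊗ₖ W) x y * phi d p q y
        = ∑ c : Fin 2, ∑ e : Fin d,
            (Matrix.diagonal ![s₀, s₁]) x.1 c * W x.2 e * phi d p q (c, e) := by
          rw [Fintype.sum_prod_type]
          simp only [Matrix.kroneckerMap_apply]
    _ = ∑ e : Fin d, (Matrix.diagonal ![s₀, s₁]) x.1 x.1 * W x.2 e * phi d p q (x.1, e) := by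
          rw [Finset.sum_eq_single x.1]
          · intro c _ hc
            simp [Matrix.diagonal_apply_ne' _ hc]
          · simp
    _ = _ := by
          rw [Finset.sum_eq_single (E d hd q x.1)]
          · rw [phi_apply d hd, Matrix.diagonal_apply_eq]; simp
          · intro e _ he
            rw [phi_apply d hd]
            simp [he]
          · simp
  calc (inner ℂ (phi d n m) (psi d (Matrix.diagonal ![s₀, s₁]) W p q) : ℂ)
      = ∑ x : Fin 2 × Fin d, (starRingEnd ℂ) (phi d n m x) *
          (![s₀, s₁] x.1 * W x.2 (E d hd q x.1) *
            ((Real.sqrt 2 : ℂ)⁻¹ * (-1 : ℂ) ^ ((p : ℕ) * (x.1 : ℕ)))) := by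
        rw [PiLp.inner_apply]
        exact Finset.sum_congr rfl fun x _ => by rw [RCLike.inner_apply', hpsi]
    _ = ∑ a : Fin 2, (starRingEnd ℂ) ((Real.sqrt 2 : ℂ)⁻¹ * (-1 : ℂ) ^ ((n : ℕ) * (a : ℕ))) *
          (![s₀, s₁] a * W (E d hd m a) (E d hd q a) *
            ((Real.sqrt 2 : ℂ)⁻¹ * (-1 : ℂ) ^ ((p : ℕ) * (a : ℕ)))) := by
        rw [Fintype.sum_prod_type]
        refine Finset.sum_congr rfl fun a _ => ?_
        rw [Finset.sum_eq_single (E d hd m a)]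
        · rw [phi_apply d hd]; simp
        · intro b _ hb
          rw [phi_apply d hd]
          simp [hb]
        · simp
    _ = _ := by
        rw [Fin.sum_univ_two]
        simp only [Matrix.cons_val_zero, Matrix.cons_val_one, Matrix.head_cons,
          Fin.val_zero, Fin.val_one, Nat.mul_zero, Nat.mul_one, pow_zero, pow_one,
          map_mul, map_inv₀, map_pow, map_one, Complex.conj_ofReal,
          show (starRingEnd ℂ) (-1) = -1 by simp]
        rw [pow_add]
        ring_nf
        rw [show ((Real.sqrt 2 : ℝ) : ℂ)⁻¹ ^ 2 = (2 : ℂ)⁻¹ by rw [sq]; exact h2]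
        ring

lemma gval0_generic (d : ℕ) (hd : 3 ≤ d) (m : Fin d) (hm : (m : ℕ) ≠ d - 1) :
    gval d m 0 = (m : ℕ) := by
  have := m.isLt
  unfold gval
  rw [if_neg hm]
  simp only [Fin.val_zero, Nat.add_zero]
  exact Nat.mod_eq_of_lt (by omega)

lemma gval1_generic (d : ℕ) (hd : 3 ≤ d) (m : Fin d) (hm : (m : ℕ) + 1 ≤ d - 2) :
    gval d m 1 = (m : ℕ) + 1 := by
  unfold gval
  rw [if_neg (by omega)]
  simp only [Fin.val_one]
  exact Nat.mod_eq_of_lt (by omega)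

lemma gval1_wrap (d : ℕ) (hd : 3 ≤ d) (m : Fin d) (hm : (m : ℕ) = d - 2) :
    gval d m 1 = 0 := by
  unfold gval
  rw [if_neg (by omega)]
  simp only [Fin.val_one]
  rw [hm, show d - 2 + 1 = d - 1 by omega, Nat.mod_self]

lemma gval_top (d : ℕ) (m : Fin d) (hm : (m : ℕ) = d - 1) (a : Fin 2) :
    gval d m a = d - 1 := by
  unfold gval; rw [if_pos hm]

lemma case_analysis (d : ℕ) (hd : 3 ≤ d) (φ₁ φ₂ : ℝ) (θ : ℕ → ℕ → ℝ)
    (h1 : ∀ k j : ℕ, 1 ≤ k → k ≤ d - 2 → 1 ≤ j → j ≤ d - 2 →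
      OddPiHalf ((φ₁ + θ k j) - (φ₂ + θ (k+1) (j+1))) ∧
      OddPiHalf ((φ₁ + θ k d) - (φ₂ + θ (k+1) d)) ∧
      OddPiHalf ((φ₁ + θ d j) - (φ₂ + θ d (j+1))) ∧
      OddPiHalf ((φ₁ + θ k (d-1)) - (φ₂ + θ (k+1) 1)) ∧
      OddPiHalf ((φ₁ + θ (d-1) j) - (φ₂ + θ 1 (j+1))))
    (h2 : OddPiHalf ((φ₁ + θ (d-1) (d-1)) - (φ₂ + θ 1 1)))
    (h3 : OddPiHalf ((φ₁ + θ (d-1) d) - (φ₂ + θ 1 d)))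
    (h4 : OddPiHalf ((φ₁ + θ d (d-1)) - (φ₂ + θ d 1)))
    (h5 : OddPiHalf (φ₁ - φ₂)) (m q : Fin d) :
    OddPiHalf ((φ₁ + θ (gval d m 0 + 1) (gval d q 0 + 1)) -
      (φ₂ + θ (gval d m 1 + 1) (gval d q 1 + 1))) := by
  have hm := m.isLt
  have hq := q.isLt
  have ed1 : d - 2 + 1 = d - 1 := by omega
  have ed2 : d - 1 + 1 = d := by omega
  by_cases hm1 : (m : ℕ) = d - 1
  · rw [gval_top d m hm1 0, gval_top d m hm1 1, ed2]
    by_cases hq1 : (q : ℕ) = d - 1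
    · rw [gval_top d q hq1 0, gval_top d q hq1 1, ed2]
      rw [show (φ₁ + θ d d) - (φ₂ + θ d d) = φ₁ - φ₂ by ring]
      exact h5
    · by_cases hq2 : (q : ℕ) = d - 2
      · rw [gval0_generic d hd q hq1, gval1_wrap d hd q hq2, hq2, ed1]
        simpa using h4
      · rw [gval0_generic d hd q hq1, gval1_generic d hd q (by omega)]
        exact (h1 1 ((q : ℕ) + 1) (by omega) (by omega) (by omega) (by omega)).2.2.1
  · by_cases hm2 : (m : ℕ) = d - 2
    · rw [gval0_generic d hd m hm1, gval1_wrap d hd m hm2, hm2, ed1]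
      by_cases hq1 : (q : ℕ) = d - 1
      · rw [gval_top d q hq1 0, gval_top d q hq1 1, ed2]
        simpa using h3
      · by_cases hq2 : (q : ℕ) = d - 2
        · rw [gval0_generic d hd q hq1, gval1_wrap d hd q hq2, hq2, ed1]
          simpa using h2
        · rw [gval0_generic d hd q hq1, gval1_generic d hd q (by omega)]
          simpa using (h1 1 ((q : ℕ) + 1) (by omega) (by omega) (by omega) (by omega)).2.2.2.2
    · rw [gval0_generic d hd m hm1, gval1_generic d hd m (by omega)]
      by_cases hq1 : (q : ℕ) = d - 1
      · rw [gval_top d q hq1 0, gval_top d q hq1 1, ed2]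
        exact (h1 ((m : ℕ) + 1) 1 (by omega) (by omega) (by omega) (by omega)).2.1
      · by_cases hq2 : (q : ℕ) = d - 2
        · rw [gval0_generic d hd q hq1, gval1_wrap d hd q hq2, hq2, ed1]
          simpa using (h1 ((m : ℕ) + 1) 1 (by omega) (by omega) (by omega) (by omega)).2.2.2.1
        · rw [gval0_generic d hd q hq1, gval1_generic d hd q (by omega)]
          exact (h1 ((m : ℕ) + 1) ((q : ℕ) + 1) (by omega) (by omega) (by omega) (by omega)).1

/-- Sufficient phase condition for mutual unbiasedness in `C² ⊗ C^d` (`d ≥ 3`): if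
`S = diag(e^{iφ₁}, e^{iφ₂})`, `W` is unitary with entries `w_{st} = (1/√d)e^{iθ_{st}}`
(`1`-based indices), and the listed phase differences are all odd multiples of `π/2`, then
`{|φ_{n,m}⟩}` and `{(S⊗W)|φ_{p,q}⟩}` are mutually unbiased. -/
theorem phase_condition_implies_mub_general (d : ℕ) (hd : 3 ≤ d) (φ₁ φ₂ : ℝ)
    (θ : ℕ → ℕ → ℝ) (W : Matrix (Fin d) (Fin d) ℂ)
    (hW : W ∈ Matrix.unitaryGroup (Fin d) ℂ)
    (hWent : ∀ s t : Fin d,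
      W s t = ((Real.sqrt d : ℂ))⁻¹ * Complex.exp (θ ((s : ℕ) + 1) ((t : ℕ) + 1) * Complex.I))
    (h1 : ∀ k j : ℕ, 1 ≤ k → k ≤ d - 2 → 1 ≤ j → j ≤ d - 2 →
      OddPiHalf ((φ₁ + θ k j) - (φ₂ + θ (k+1) (j+1))) ∧
      OddPiHalf ((φ₁ + θ k d) - (φ₂ + θ (k+1) d)) ∧
      OddPiHalf ((φ₁ + θ d j) - (φ₂ + θ d (j+1))) ∧
      OddPiHalf ((φ₁ + θ k (d-1)) - (φ₂ + θ (k+1) 1)) ∧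
      OddPiHalf ((φ₁ + θ (d-1) j) - (φ₂ + θ 1 (j+1))))
    (h2 : OddPiHalf ((φ₁ + θ (d-1) (d-1)) - (φ₂ + θ 1 1)))
    (h3 : OddPiHalf ((φ₁ + θ (d-1) d) - (φ₂ + θ 1 d)))
    (h4 : OddPiHalf ((φ₁ + θ d (d-1)) - (φ₂ + θ d 1)))
    (h5 : OddPiHalf (φ₁ - φ₂)) :
    ∀ (n p : Fin 2) (m q : Fin d),
      ‖(inner ℂ (phi d n m)
          (psi d (Matrix.diagonal ![Complex.exp (φ₁ * Complex.I),
            Complex.exp (φ₂ * Complex.I)]) W p q) : ℂ)‖ = 1 / Real.sqrt (2 * d) := by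
  intro n p m q
  rw [inner_eq d hd _ _ W n p m q, hWent, hWent]
  set A : ℝ := φ₁ + θ ((E d hd m 0 : ℕ) + 1) ((E d hd q 0 : ℕ) + 1) with hA
  set B : ℝ := φ₂ + θ ((E d hd m 1 : ℕ) + 1) ((E d hd q 1 : ℕ) + 1) with hB
  have hΔ : OddPiHalf (A - B) := by
    rw [hA, hB]
    exact case_analysis d hd φ₁ φ₂ θ h1 h2 h3 h4 h5 m q
  set ε : ℂ := (-1 : ℂ) ^ ((n : ℕ) + (p : ℕ)) with hε
  have hεval : ε = 1 ∨ ε = -1 := by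
    rcases Nat.even_or_odd ((n : ℕ) + (p : ℕ)) with h | h
    · left; exact h.neg_one_pow
    · right; exact h.neg_one_pow
  have key : (2 : ℂ)⁻¹ *
      (Complex.exp (φ₁ * Complex.I) *
        (((Real.sqrt d : ℂ))⁻¹ * Complex.exp (θ ((E d hd m 0 : ℕ) + 1) ((E d hd q 0 : ℕ) + 1) * Complex.I)) +
      ε * Complex.exp (φ₂ * Complex.I) *
        (((Real.sqrt d : ℂ))⁻¹ * Complex.exp (θ ((E d hd m 1 : ℕ) + 1) ((E d hd q 1 : ℕ) + 1) * Complex.I))) =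
      (2 : ℂ)⁻¹ * ((Real.sqrt d : ℂ))⁻¹ * Complex.exp (B * Complex.I) *
        (Complex.exp (((A - B : ℝ) : ℂ) * Complex.I) + ε) := by
    have e1 : Complex.exp (φ₁ * Complex.I) *
        Complex.exp (θ ((E d hd m 0 : ℕ) + 1) ((E d hd q 0 : ℕ) + 1) * Complex.I) =
        Complex.exp (B * Complex.I) * Complex.exp (((A - B : ℝ) : ℂ) * Complex.I) := by
      rw [← Complex.exp_add, ← Complex.exp_add]
      congr 1
      push_cast [hA, hB]
      ring
    have e2 : Complex.exp (φ₂ * Complex.I) *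
        Complex.exp (θ ((E d hd m 1 : ℕ) + 1) ((E d hd q 1 : ℕ) + 1) * Complex.I) =
        Complex.exp (B * Complex.I) := by
      rw [← Complex.exp_add]
      congr 1
      push_cast [hB]
      ring
    calc _ = (2 : ℂ)⁻¹ * ((Real.sqrt d : ℂ))⁻¹ *
        (Complex.exp (φ₁ * Complex.I) *
          Complex.exp (θ ((E d hd m 0 : ℕ) + 1) ((E d hd q 0 : ℕ) + 1) * Complex.I) +
         ε * (Complex.exp (φ₂ * Complex.I) *
          Complex.exp (θ ((E d hd m 1 : ℕ) + 1) ((E d hd q 1 : ℕ) + 1) * Complex.I))) := by ring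
      _ = _ := by rw [e1, e2]; ring
  rw [key]
  rw [norm_mul, norm_mul, norm_mul]
  rw [norm_exp_add_of_oddPiHalf hΔ hεval]
  have hd0 : (0 : ℝ) < d := by positivity
  have hsd : (0 : ℝ) < Real.sqrt d := Real.sqrt_pos.mpr hd0
  have hs2 : (0 : ℝ) < Real.sqrt 2 := by positivity
  have n1 : ‖(2 : ℂ)⁻¹‖ = 2⁻¹ := by norm_num
  have n2 : ‖((Real.sqrt d : ℝ) : ℂ)⁻¹‖ = (Real.sqrt d)⁻¹ := by
    rw [norm_inv, Complex.norm_real, Real.norm_of_nonneg (le_of_lt hsd)]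
  have n3 : ‖Complex.exp ((B : ℂ) * Complex.I)‖ = 1 := by
    rw [Complex.norm_exp_ofReal_mul_I]
  rw [n1, n2, n3]
  rw [Real.sqrt_mul (by norm_num : (0:ℝ) ≤ 2)]
  have h22 : Real.sqrt 2 * Real.sqrt 2 = 2 := Real.mul_self_sqrt (by norm_num)
  field_simp
  nlinarith [hs2, hsd, h22]
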